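/- arXiv:2507.18303 — 7 statements merged into one kernel-verified Lean document; each statement's English description precedes it below -/
import Mathlib

section
/- For any real θ with sin θ ≠ 0 and cos θ ≠ 0, the determinant of A(θ) equals (2 + tan²θ + cot²θ)² = 16 / sin⁴(2θ); in particular det A(θ) ≥ 16 > 0 and A(θ) is invertible. -/
/-!
Write `A(θ)` as a matrix in `a = tan θ`, `b = cot θ`. For arbitrary `a, b` its determinant
factors as `(a + b)² ((a - b)² + 4)`; since `a b = 1`, both factors equal
`2 + a² + b² = (a - b)² + 4 ≥ 4`, and `tan θ + cot θ = 2 / sin 2θ`.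
-/

open Real Matrix

noncomputable def alphaA (θ : ℝ) : Matrix (Fin 4) (Fin 4) ℝ :=
  !![1, -Real.cot θ, -Real.tan θ, 1;
     Real.cot θ, 1, -1, -Real.tan θ;
     Real.tan θ, -1, 1, -Real.cot θ;
     1, Real.tan θ, Real.cot θ, 1]

section

variable {R : Type*} [CommRing R]

def tanCotMatrix (a b : R) : Matrix (Fin 4) (Fin 4) R :=
  !![1, -b, -a, 1;
     b, 1, -1, -a;
     a, -1, 1, -b;
     1, a, b, 1]

theorem det_tanCotMatrix (a b : R) :
    (tanCotMatrix a b).det = (a + b) ^ 2 * ((a - b) ^ 2 + 4) := by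
  simp [tanCotMatrix, det_succ_row_zero, Fin.sum_univ_succ, Fin.succAbove]
  ring

theorem det_tanCotMatrix_of_mul_eq_one {a b : R} (hab : a * b = 1) :
    (tanCotMatrix a b).det = (2 + a ^ 2 + b ^ 2) ^ 2 := by
  rw [det_tanCotMatrix]
  linear_combination (-4 * (a * b - 1)) * hab

end

theorem alphaA_eq_tanCotMatrix (θ : ℝ) : alphaA θ = tanCotMatrix (tan θ) (cot θ) := rfl

theorem Real.tan_mul_cot_of_ne_zero {θ : ℝ} (hs : sin θ ≠ 0) (hc : cos θ ≠ 0) :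
    tan θ * cot θ = 1 := by
  rw [tan_eq_sin_div_cos, cot_eq_cos_div_sin]
  field_simp

theorem Real.two_add_tan_sq_add_cot_sq {θ : ℝ} (hs : sin θ ≠ 0) (hc : cos θ ≠ 0) :
    2 + tan θ ^ 2 + cot θ ^ 2 = 4 / sin (2 * θ) ^ 2 := by
  rw [sin_two_mul, tan_eq_sin_div_cos, cot_eq_cos_div_sin]
  field_simp
  linear_combination 4 * (sin θ ^ 2 + cos θ ^ 2 + 1) * sin_sq_add_cos_sq θ

theorem stmt2 (θ : ℝ) (hs : Real.sin θ ≠ 0) (hc : Real.cos θ ≠ 0) :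
    (alphaA θ).det = (2 + Real.tan θ ^ 2 + Real.cot θ ^ 2) ^ 2 ∧
    (alphaA θ).det = 16 / Real.sin (2 * θ) ^ 4 ∧
    16 ≤ (alphaA θ).det ∧ 0 < (alphaA θ).det ∧ IsUnit (alphaA θ) := by
  have hab := tan_mul_cot_of_ne_zero hs hc
  have hdet : (alphaA θ).det = (2 + tan θ ^ 2 + cot θ ^ 2) ^ 2 := by
    rw [alphaA_eq_tanCotMatrix, det_tanCotMatrix_of_mul_eq_one hab]
  have hfour : 4 ≤ 2 + tan θ ^ 2 + cot θ ^ 2 := by nlinarith [sq_nonneg (tan θ - cot θ)]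
  have hsixteen : 16 ≤ (alphaA θ).det := by rw [hdet]; nlinarith
  have hpos : 0 < (alphaA θ).det := by linarith
  refine ⟨hdet, ?_, hsixteen, hpos, ?_⟩
  · rw [hdet, two_add_tan_sq_add_cot_sq hs hc]
    ring
  · exact (isUnit_iff_isUnit_det _).mpr (isUnit_iff_ne_zero.mpr hpos.ne')
end

section
/- For any real θ with sin θ ≠ 0 and cos θ ≠ 0, the characteristic polynomial of A(θ) factors as χ(λ) = (λ² + (tan θ + cot θ)²)·((λ − 2)² + (cot θ − tan θ)²). -/
open Real Matrix

open Polynomial in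
theorem stmt11 (θ : ℝ) (hs : Real.sin θ ≠ 0) (hc : Real.cos θ ≠ 0) :
    (alphaA θ).charpoly =
      (X ^ 2 + C ((Real.tan θ + Real.cot θ) ^ 2)) *
        ((X - C 2) ^ 2 + C ((Real.cot θ - Real.tan θ) ^ 2)) := by
  rw [Matrix.charpoly]
  simp only [Matrix.det_succ_row_zero, Fin.sum_univ_succ, Fin.sum_univ_zero,
    charmatrix_apply, alphaA, Matrix.submatrix_apply, Fin.succAbove, Fin.isValue]
  norm_num [Matrix.one_apply, Fin.ext_iff, Fin.lt_def, Fin.succ, Matrix.cons_val_zero,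
    Matrix.cons_val_one, Matrix.head_cons, map_ofNat]
  ring
end

section
/- For any real θ with sin θ ≠ 0 and cos θ ≠ 0, the complex eigenvalues of A(θ) (viewed as a complex matrix) are exactly ±(2i)/sin(2θ) and 2 ± 2i·cot(2θ); in particular every eigenvalue has real part equal to 0 or 2, and every eigenvalue has modulus 2/|sin(2θ)|. -/
/-!
For arbitrary entries `c, t`, the matrix with the sign pattern of `A(θ)` has characteristic
polynomial `(X² + (c + t)²) ((X - 2)² + (c - t)²)`, so over `ℂ` its eigenvalues are
`±i (c + t)` and `2 ± i (c - t)`. With `c = cot θ`, `t = tan θ` the double-angle identities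
`cot θ + tan θ = 2 / sin 2θ` and `cot θ - tan θ = 2 cot 2θ` give the stated eigenvalues, and
`2 ± 2i cot x = (2 / sin x) (sin x ± i cos x)` gives their common modulus.
-/

open Real Matrix

open Polynomial

def alphaMatrix {R : Type*} [Ring R] (c t : R) : Matrix (Fin 4) (Fin 4) R :=
  !![1, -c, -t, 1;
     c, 1, -1, -t;
     t, -1, 1, -c;
     1, t, c, 1]

lemma alphaMatrix_map {R S : Type*} [Ring R] [Ring S] (f : R →+* S) (c t : R) :
    (alphaMatrix c t).map f = alphaMatrix (f c) (f t) := by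
  ext i j
  fin_cases i <;> fin_cases j <;> simp [alphaMatrix]

lemma det_scalar_sub_alphaMatrix {R : Type*} [CommRing R] (μ c t : R) :
    (scalar (Fin 4) μ - alphaMatrix c t).det =
      (μ ^ 2 + (c + t) ^ 2) * ((μ - 2) ^ 2 + (c - t) ^ 2) := by
  have : scalar (Fin 4) μ - alphaMatrix c t =
      !![μ - 1, c, t, -1; -c, μ - 1, 1, t; -t, 1, μ - 1, c; -1, -t, -c, μ - 1] := by
    ext i j
    fin_cases i <;> fin_cases j <;> simp [alphaMatrix]
  rw [this]
  eval_det
  ring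

lemma charpoly_alphaMatrix {R : Type*} [CommRing R] (c t : R) :
    (alphaMatrix c t).charpoly = (X ^ 2 + C (c + t) ^ 2) * ((X - 2) ^ 2 + C (c - t) ^ 2) := by
  rw [charpoly, charmatrix, RingHom.mapMatrix_apply, alphaMatrix_map, det_scalar_sub_alphaMatrix]
  simp only [map_add, map_sub]

lemma Complex.sq_add_sq_eq_zero_iff (z w : ℂ) :
    z ^ 2 + w ^ 2 = 0 ↔ z = I * w ∨ z = -(I * w) := by
  rw [show z ^ 2 + w ^ 2 = (z - I * w) * (z + I * w) by linear_combination w ^ 2 * I_sq,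
    mul_eq_zero, sub_eq_zero, add_eq_zero_iff_eq_neg]

lemma Real.cot_add_tan {x : ℝ} (hs : sin x ≠ 0) (hc : cos x ≠ 0) :
    cot x + tan x = 2 / sin (2 * x) := by
  rw [cot_eq_cos_div_sin, tan_eq_sin_div_cos, sin_two_mul]
  field_simp
  linear_combination sin_sq_add_cos_sq x

lemma Real.cot_sub_tan {x : ℝ} (hs : sin x ≠ 0) (hc : cos x ≠ 0) :
    cot x - tan x = 2 * cot (2 * x) := by
  rw [tan_eq_sin_div_cos, cot_eq_cos_div_sin, cot_eq_cos_div_sin, sin_two_mul, cos_two_mul']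
  field_simp

lemma mem_spectrum_alphaMatrix_iff {K : Type*} [Field K] (μ c t : K) :
    μ ∈ spectrum K (alphaMatrix c t) ↔
      μ ^ 2 + (c + t) ^ 2 = 0 ∨ (μ - 2) ^ 2 + (c - t) ^ 2 = 0 := by
  rw [mem_spectrum_iff_isRoot_charpoly, charpoly_alphaMatrix, IsRoot, eval_mul, mul_eq_zero]
  simp

lemma alphaA_map_ofReal (θ : ℝ) :
    (alphaA θ).map (fun x => (x : ℂ)) = alphaMatrix (cot θ : ℂ) (tan θ) :=
  alphaMatrix_map Complex.ofRealHom _ _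

lemma norm_two_add_two_mul_I_cot {x : ℝ} (hx : sin x ≠ 0) :
    ‖2 + 2 * Complex.I * (cot x : ℂ)‖ = 2 / |sin x| := by
  calc ‖2 + 2 * Complex.I * (cot x : ℂ)‖
        = ‖((2 / sin x : ℝ) : ℂ) * (sin x + cos x * Complex.I)‖ := by
        have hx' : Complex.sin x ≠ 0 := by exact_mod_cast hx
        rw [cot_eq_cos_div_sin]
        push_cast
        field_simp
    _ = 2 / |sin x| := by
        rw [norm_mul, Complex.norm_add_mul_I, sin_sq_add_cos_sq, Real.sqrt_one, mul_one,
          Complex.norm_real, norm_div, Real.norm_ofNat, Real.norm_eq_abs]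

lemma norm_two_sub_two_mul_I_cot {x : ℝ} (hx : sin x ≠ 0) :
    ‖2 - 2 * Complex.I * (cot x : ℂ)‖ = 2 / |sin x| := by
  rw [← norm_two_add_two_mul_I_cot hx, ← Complex.norm_conj]
  simp [sub_eq_add_neg, map_ofNat, -Complex.ofReal_cot]

lemma mem_spectrum_alphaA_iff {θ : ℝ} (hs : sin θ ≠ 0) (hc : cos θ ≠ 0) (μ : ℂ) :
    μ ∈ spectrum ℂ ((alphaA θ).map (fun x => (x : ℂ))) ↔
      μ = 2 * Complex.I / (sin (2 * θ) : ℂ) ∨ μ = -(2 * Complex.I / (sin (2 * θ) : ℂ)) ∨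
        μ = 2 + 2 * Complex.I * (cot (2 * θ) : ℂ) ∨
        μ = 2 - 2 * Complex.I * (cot (2 * θ) : ℂ) := by
  rw [alphaA_map_ofReal, mem_spectrum_alphaMatrix_iff, ← Complex.ofReal_add,
    ← Complex.ofReal_sub, cot_add_tan hs hc, cot_sub_tan hs hc, Complex.sq_add_sq_eq_zero_iff,
    Complex.sq_add_sq_eq_zero_iff, sub_eq_iff_eq_add', sub_eq_iff_eq_add', ← sub_eq_add_neg,
    or_assoc]
  simp only [Complex.ofReal_div, Complex.ofReal_mul, Complex.ofReal_ofNat, mul_div_assoc,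
    mul_div_left_comm Complex.I, mul_assoc, mul_left_comm Complex.I]

theorem stmt12 (θ : ℝ) (hs : Real.sin θ ≠ 0) (hc : Real.cos θ ≠ 0) :
    (∀ μ : ℂ, μ ∈ spectrum ℂ ((alphaA θ).map (fun x => (x : ℂ))) ↔
      μ = 2 * Complex.I / (Real.sin (2 * θ) : ℂ) ∨
      μ = -(2 * Complex.I / (Real.sin (2 * θ) : ℂ)) ∨
      μ = 2 + 2 * Complex.I * (Real.cot (2 * θ) : ℂ) ∨
      μ = 2 - 2 * Complex.I * (Real.cot (2 * θ) : ℂ)) ∧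
    (∀ μ ∈ spectrum ℂ ((alphaA θ).map (fun x => (x : ℂ))), μ.re = 0 ∨ μ.re = 2) ∧
    (∀ μ ∈ spectrum ℂ ((alphaA θ).map (fun x => (x : ℂ))),
      ‖μ‖ = 2 / |Real.sin (2 * θ)|) := by
  have h2θ : sin (2 * θ) ≠ 0 := by
    rw [sin_two_mul]
    exact mul_ne_zero (mul_ne_zero two_ne_zero hs) hc
  refine ⟨mem_spectrum_alphaA_iff hs hc, fun μ hμ => ?_, fun μ hμ => ?_⟩
  · rcases (mem_spectrum_alphaA_iff hs hc μ).1 hμ with rfl | rfl | rfl | rfl <;>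
      simp [-Complex.ofReal_sin, -Complex.ofReal_cot]
  · rcases (mem_spectrum_alphaA_iff hs hc μ).1 hμ with rfl | rfl | rfl | rfl
    · simp [-Complex.ofReal_sin]
    · simp [-Complex.ofReal_sin]
    · exact norm_two_add_two_mul_I_cot h2θ
    · exact norm_two_sub_two_mul_I_cot h2θ
end

section
/- Let θ be real with sin θ ≠ 0 and cos θ ≠ 0, and let x : ℝ → ℝ⁴ be differentiable with x'(t) = A(θ)·x(t) for all t. Then the function t ↦ ‖x(t)‖² is monotone nondecreasing, since its derivative equals ⟨x(t), (A(θ)+A(θ)ᵀ)·x(t)⟩ = 2⟨x(t), S₀·x(t)⟩ ≥ 0. -/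
open Real Matrix

def S₀ : Matrix (Fin 4) (Fin 4) ℝ := !![1,0,0,1; 0,1,-1,0; 0,-1,1,0; 1,0,0,1]

/-!
The derivative of `‖x‖²` along a solution of `x' = A x` is `2⟪x, A x⟫ = ⟪x, (A + Aᵀ) x⟫`, so the
squared norm is nondecreasing as soon as the symmetric part of `A` is positive semidefinite.
For `A = alphaA θ` the `cot θ` and `tan θ` entries are antisymmetric and cancel in `A + Aᵀ = 2 S₀`,
and `⟪v, S₀ v⟫ = (v₀ + v₃)² + (v₁ - v₂)²`.
-/

open scoped InnerProductSpace

namespace Matrix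

variable {n : Type*} [Fintype n]

lemma inner_toLp_add_transpose_mulVec (A : Matrix n n ℝ) (v : EuclideanSpace ℝ n) :
    ⟪v, WithLp.toLp 2 ((A + Aᵀ) *ᵥ v)⟫_ℝ = 2 * ⟪v, WithLp.toLp 2 (A *ᵥ v)⟫_ℝ := by
  simp only [EuclideanSpace.inner_eq_star_dotProduct, star_trivial]
  rw [add_mulVec, add_dotProduct, mulVec_transpose, ← dotProduct_mulVec, dotProduct_comm]
  ring

lemma PosSemidef.inner_toLp_mulVec_nonneg {M : Matrix n n ℝ} (hM : M.PosSemidef)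
    (v : EuclideanSpace ℝ n) : 0 ≤ ⟪v, WithLp.toLp 2 (M *ᵥ v)⟫_ℝ := by
  simpa [EuclideanSpace.inner_eq_star_dotProduct, dotProduct_comm] using
    hM.dotProduct_mulVec_nonneg (WithLp.ofLp v)

variable {A : Matrix n n ℝ} {x : ℝ → EuclideanSpace ℝ n}

theorem hasDerivAt_norm_sq_of_hasDerivAt_mulVec
    (hx : ∀ t, HasDerivAt x (WithLp.toLp 2 (A *ᵥ x t)) t) (t : ℝ) :
    HasDerivAt (fun s => ‖x s‖ ^ 2) ⟪x t, WithLp.toLp 2 ((A + Aᵀ) *ᵥ x t)⟫_ℝ t := by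
  rw [inner_toLp_add_transpose_mulVec]
  exact (hx t).norm_sq

theorem monotone_norm_sq_of_hasDerivAt_mulVec (hA : (A + Aᵀ).PosSemidef)
    (hx : ∀ t, HasDerivAt x (WithLp.toLp 2 (A *ᵥ x t)) t) :
    Monotone (fun t => ‖x t‖ ^ 2) :=
  monotone_of_hasDerivAt_nonneg (hasDerivAt_norm_sq_of_hasDerivAt_mulVec hx)
    fun t => hA.inner_toLp_mulVec_nonneg (x t)

end Matrix

lemma alphaA_add_transpose (θ : ℝ) : alphaA θ + (alphaA θ)ᵀ = (2 : ℝ) • S₀ := by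
  ext i j
  fin_cases i <;> fin_cases j <;> simp [alphaA, S₀] <;> norm_num

lemma posSemidef_S₀ : S₀.PosSemidef := by
  refine PosSemidef.of_dotProduct_mulVec_nonneg ?_ fun v => ?_
  · ext i j
    fin_cases i <;> fin_cases j <;> rfl
  · have h : star v ⬝ᵥ (S₀ *ᵥ v) = (v 0 + v 3) ^ 2 + (v 1 - v 2) ^ 2 := by
      simp [S₀, dotProduct, mulVec, Fin.sum_univ_four]
      ring
    rw [h]
    positivity

theorem stmt14_general (θ : ℝ)
    (x : ℝ → EuclideanSpace ℝ (Fin 4))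
    (hx : ∀ t, HasDerivAt x (WithLp.toLp 2 ((alphaA θ).mulVec (x t) : Fin 4 → ℝ) : EuclideanSpace ℝ (Fin 4)) t) :
    Monotone (fun t => ‖x t‖ ^ 2) ∧
    ∀ t, deriv (fun s => ‖x s‖ ^ 2) t =
        inner ℝ (x t) (WithLp.toLp 2 (((alphaA θ + (alphaA θ)ᵀ).mulVec (x t) : Fin 4 → ℝ)) :
          EuclideanSpace ℝ (Fin 4)) ∧
      deriv (fun s => ‖x s‖ ^ 2) t =
        2 * inner ℝ (x t) (WithLp.toLp 2 ((S₀.mulVec (x t) : Fin 4 → ℝ)) : EuclideanSpace ℝ (Fin 4)) ∧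
      (0 : ℝ) ≤ deriv (fun s => ‖x s‖ ^ 2) t := by
  have hpsd : (alphaA θ + (alphaA θ)ᵀ).PosSemidef := by
    rw [alphaA_add_transpose]
    exact posSemidef_S₀.smul zero_le_two
  refine ⟨monotone_norm_sq_of_hasDerivAt_mulVec hpsd hx, fun t => ?_⟩
  have hderiv := (hasDerivAt_norm_sq_of_hasDerivAt_mulVec hx t).deriv
  refine ⟨hderiv, ?_, hderiv ▸ hpsd.inner_toLp_mulVec_nonneg (x t)⟩
  rw [hderiv, alphaA_add_transpose, smul_mulVec, WithLp.toLp_smul, real_inner_smul_right]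

theorem stmt14 (θ : ℝ) (hs : Real.sin θ ≠ 0) (hc : Real.cos θ ≠ 0)
    (x : ℝ → EuclideanSpace ℝ (Fin 4))
    (hx : ∀ t, HasDerivAt x (WithLp.toLp 2 ((alphaA θ).mulVec (x t) : Fin 4 → ℝ) : EuclideanSpace ℝ (Fin 4)) t) :
    Monotone (fun t => ‖x t‖ ^ 2) ∧
    ∀ t, deriv (fun s => ‖x s‖ ^ 2) t =
        inner ℝ (x t) (WithLp.toLp 2 (((alphaA θ + (alphaA θ)ᵀ).mulVec (x t) : Fin 4 → ℝ)) :
          EuclideanSpace ℝ (Fin 4)) ∧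
      deriv (fun s => ‖x s‖ ^ 2) t =
        2 * inner ℝ (x t) (WithLp.toLp 2 ((S₀.mulVec (x t) : Fin 4 → ℝ)) : EuclideanSpace ℝ (Fin 4)) ∧
      (0 : ℝ) ≤ deriv (fun s => ‖x s‖ ^ 2) t :=
  stmt14_general θ x hx
end

section
/- Let θ be real with sin θ ≠ 0 and cos θ ≠ 0, and let x : ℝ → ℝ⁴ be differentiable with x'(t) = A(θ)·x(t) for all t. If x(0) lies in the subspace W = span{(1,0,0,−1), (0,1,1,0)}, then x(t) lies in W for all t and ‖x(t)‖ = ‖x(0)‖ for all t; explicitly, writing ω = tan θ + cot θ, the solution with x(0) = a·(1,0,0,−1) + b·(0,1,1,0) is x(t) = (a cos(ωt) − b sin(ωt))·(1,0,0,−1) + (a sin(ωt) + b cos(ωt))·(0,1,1,0). -/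
/-!
On the plane `W = span {v, w}` the matrix acts by `v ↦ ω w`, `w ↦ -ω v`, so the rotation curve
`t ↦ (a cos ωt - b sin ωt) v + (a sin ωt + b cos ωt) w` solves `x' = A x`; by uniqueness for linear
ODEs it is the solution. Since `v ⊥ w` and `‖v‖ = ‖w‖`, its norm is `√(a² + b²) ‖v‖` for all `t`.
-/

open Real Matrix

open Set

theorem ContinuousLinearMap.eq_of_hasDerivAt_apply {E : Type*} [NormedAddCommGroup E]
    [NormedSpace ℝ E] (L : E →L[ℝ] E) {f g : ℝ → E} {t₀ : ℝ}
    (hf : ∀ t, HasDerivAt f (L (f t)) t) (hg : ∀ t, HasDerivAt g (L (g t)) t)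
    (h : f t₀ = g t₀) : f = g :=
  ODE_solution_unique_univ (v := fun _ => L) (s := fun _ => univ)
    (fun _ => L.lipschitz.lipschitzOnWith) (fun t => ⟨hf t, trivial⟩)
    (fun t => ⟨hg t, trivial⟩) h

section Module

variable {E : Type*} [AddCommGroup E] [Module ℝ E]

noncomputable def planeRotation (v w : E) (ω a b t : ℝ) : E :=
  (a * cos (ω * t) - b * sin (ω * t)) • v + (a * sin (ω * t) + b * cos (ω * t)) • w

theorem planeRotation_zero (v w : E) (ω a b : ℝ) :
    planeRotation v w ω a b 0 = a • v + b • w := by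
  simp [planeRotation]

theorem planeRotation_mem_span (v w : E) (ω a b t : ℝ) :
    planeRotation v w ω a b t ∈ Submodule.span ℝ {v, w} :=
  Submodule.add_mem _ (Submodule.smul_mem _ _ (Submodule.subset_span (mem_insert _ _)))
    (Submodule.smul_mem _ _ (Submodule.subset_span (mem_insert_of_mem _ rfl)))

end Module

section Normed

variable {E : Type*} [NormedAddCommGroup E]

theorem hasDerivAt_planeRotation [NormedSpace ℝ E] {v w : E} {ω : ℝ} (L : E →ₗ[ℝ] E)
    (hv : L v = ω • w) (hw : L w = -ω • v) (a b t : ℝ) :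
    HasDerivAt (planeRotation v w ω a b) (L (planeRotation v w ω a b t)) t := by
  have hωt : HasDerivAt (fun t => ω * t) ω t := by simpa using (hasDerivAt_id t).const_mul ω
  have hc := ((hωt.cos.const_mul a).sub (hωt.sin.const_mul b)).smul_const v
  have hs := ((hωt.sin.const_mul a).add (hωt.cos.const_mul b)).smul_const w
  refine (hc.add hs).congr_deriv ?_
  simp only [planeRotation, map_add, map_smul, hv, hw, smul_smul]
  module

variable [InnerProductSpace ℝ E]

theorem norm_smul_add_smul_of_inner_eq_zero {v w : E} (hvw : inner ℝ v w = 0)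
    (hn : ‖v‖ = ‖w‖) (c s : ℝ) : ‖c • v + s • w‖ = √(c ^ 2 + s ^ 2) * ‖v‖ := by
  have hsq : ‖c • v + s • w‖ ^ 2 = (c ^ 2 + s ^ 2) * ‖v‖ ^ 2 := by
    rw [norm_add_sq_real, inner_smul_left, inner_smul_right, hvw, norm_smul, norm_smul, ← hn]
    simp only [Real.norm_eq_abs, mul_pow, sq_abs]
    ring
  rw [← Real.sqrt_sq (norm_nonneg (c • v + s • w)), hsq, Real.sqrt_mul (by positivity),
    Real.sqrt_sq (norm_nonneg v)]

theorem norm_planeRotation {v w : E} (hvw : inner ℝ v w = 0) (hn : ‖v‖ = ‖w‖) (ω a b t : ℝ) :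
    ‖planeRotation v w ω a b t‖ = √(a ^ 2 + b ^ 2) * ‖v‖ := by
  rw [planeRotation, norm_smul_add_smul_of_inner_eq_zero hvw hn]
  congr 2
  linear_combination (a ^ 2 + b ^ 2) * sin_sq_add_cos_sq (ω * t)

end Normed

theorem alphaA_mulVec_one_zero_zero_neg_one (θ : ℝ) :
    alphaA θ *ᵥ ![1, 0, 0, -1] = (tan θ + cot θ) • ![0, 1, 1, 0] := by
  ext i; fin_cases i <;> simp [alphaA, mulVec, dotProduct, Fin.sum_univ_four, add_comm]

theorem alphaA_mulVec_zero_one_one_zero (θ : ℝ) :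
    alphaA θ *ᵥ ![0, 1, 1, 0] = -(tan θ + cot θ) • ![1, 0, 0, -1] := by
  ext i; fin_cases i <;> simp [alphaA, mulVec, dotProduct, Fin.sum_univ_four, add_comm]

theorem stmt16_general (θ : ℝ)
    (x : ℝ → EuclideanSpace ℝ (Fin 4))
    (hx : ∀ t, HasDerivAt x (WithLp.toLp 2 ((alphaA θ).mulVec (x t) : Fin 4 → ℝ) : EuclideanSpace ℝ (Fin 4)) t)
    (a b : ℝ)
    (h0 : x 0 = a • (WithLp.toLp 2 (![1,0,0,-1] : Fin 4 → ℝ) : EuclideanSpace ℝ (Fin 4)) +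
        b • (WithLp.toLp 2 (![0,1,1,0] : Fin 4 → ℝ) : EuclideanSpace ℝ (Fin 4))) :
    (∀ t, x t ∈ Submodule.span ℝ
        ({(WithLp.toLp 2 (![1,0,0,-1] : Fin 4 → ℝ) : EuclideanSpace ℝ (Fin 4)),
          (WithLp.toLp 2 (![0,1,1,0] : Fin 4 → ℝ) : EuclideanSpace ℝ (Fin 4))} :
          Set (EuclideanSpace ℝ (Fin 4)))) ∧
    (∀ t, ‖x t‖ = ‖x 0‖) ∧
    (∀ t, x t =
      (a * Real.cos ((Real.tan θ + Real.cot θ) * t) -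
        b * Real.sin ((Real.tan θ + Real.cot θ) * t)) •
          (WithLp.toLp 2 (![1,0,0,-1] : Fin 4 → ℝ) : EuclideanSpace ℝ (Fin 4)) +
      (a * Real.sin ((Real.tan θ + Real.cot θ) * t) +
        b * Real.cos ((Real.tan θ + Real.cot θ) * t)) •
          (WithLp.toLp 2 (![0,1,1,0] : Fin 4 → ℝ) : EuclideanSpace ℝ (Fin 4))) := by
  set v : EuclideanSpace ℝ (Fin 4) := WithLp.toLp 2 ![1, 0, 0, -1]
  set w : EuclideanSpace ℝ (Fin 4) := WithLp.toLp 2 ![0, 1, 1, 0]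
  set A := toEuclideanCLM (n := Fin 4) (𝕜 := ℝ) (alphaA θ)
  have hAv : A v = (tan θ + cot θ) • w :=
    congrArg (WithLp.toLp 2) (alphaA_mulVec_one_zero_zero_neg_one θ)
  have hAw : A w = -(tan θ + cot θ) • v :=
    congrArg (WithLp.toLp 2) (alphaA_mulVec_zero_one_one_zero θ)
  have hvw : inner ℝ v w = 0 := by simp [v, w, PiLp.inner_apply, Fin.sum_univ_four]
  have hn : ‖v‖ = ‖w‖ := by simp [v, w, EuclideanSpace.norm_eq, Fin.sum_univ_four]
  obtain rfl : x = planeRotation v w (tan θ + cot θ) a b :=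
    A.eq_of_hasDerivAt_apply hx (hasDerivAt_planeRotation A.toLinearMap hAv hAw a b)
      (h0.trans (planeRotation_zero v w _ a b).symm)
  refine ⟨planeRotation_mem_span v w _ a b, fun t => ?_, fun t => rfl⟩
  rw [norm_planeRotation hvw hn, norm_planeRotation hvw hn]

theorem stmt16 (θ : ℝ) (hs : Real.sin θ ≠ 0) (hc : Real.cos θ ≠ 0)
    (x : ℝ → EuclideanSpace ℝ (Fin 4))
    (hx : ∀ t, HasDerivAt x (WithLp.toLp 2 ((alphaA θ).mulVec (x t) : Fin 4 → ℝ) : EuclideanSpace ℝ (Fin 4)) t)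
    (a b : ℝ)
    (h0 : x 0 = a • (WithLp.toLp 2 (![1,0,0,-1] : Fin 4 → ℝ) : EuclideanSpace ℝ (Fin 4)) +
        b • (WithLp.toLp 2 (![0,1,1,0] : Fin 4 → ℝ) : EuclideanSpace ℝ (Fin 4))) :
    (∀ t, x t ∈ Submodule.span ℝ
        ({(WithLp.toLp 2 (![1,0,0,-1] : Fin 4 → ℝ) : EuclideanSpace ℝ (Fin 4)),
          (WithLp.toLp 2 (![0,1,1,0] : Fin 4 → ℝ) : EuclideanSpace ℝ (Fin 4))} :
          Set (EuclideanSpace ℝ (Fin 4)))) ∧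
    (∀ t, ‖x t‖ = ‖x 0‖) ∧
    (∀ t, x t =
      (a * Real.cos ((Real.tan θ + Real.cot θ) * t) -
        b * Real.sin ((Real.tan θ + Real.cot θ) * t)) •
          (WithLp.toLp 2 (![1,0,0,-1] : Fin 4 → ℝ) : EuclideanSpace ℝ (Fin 4)) +
      (a * Real.sin ((Real.tan θ + Real.cot θ) * t) +
        b * Real.cos ((Real.tan θ + Real.cot θ) * t)) •
          (WithLp.toLp 2 (![0,1,1,0] : Fin 4 → ℝ) : EuclideanSpace ℝ (Fin 4))) :=
  stmt16_general θ x hx a b h0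
end

section
/- Let θ be real with sin θ ≠ 0 and cos θ ≠ 0 and set ω' = cot θ − tan θ. If x : ℝ → ℝ⁴ solves x'(t) = A(θ)·x(t) with x(0) = a·(1,0,0,1) + b·(0,1,−1,0) ≠ 0, then ‖x(t)‖ = e^{2t}·‖x(0)‖ for all t; in particular ‖x(t)‖ → ∞ as t → ∞. -/
open Real Matrix

/-! In the coordinates `u = x₀ + x₃`, `v = x₁ - x₂` along `V` and `r = x₀ - x₃`, `s = x₁ + x₂`
along `V⊥`, the system `x' = A(θ) x` splits into the planar systems `u' = 2u - ω'v`,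
`v' = ω'u + 2v` and `r' = -κs`, `s' = κr` with `κ = cot θ + tan θ`. For any planar system
`u' = λu - ωv`, `v' = ωu + λv` the quantity `e^{-2λt} (u² + v²)` has zero derivative, so here
`u² + v²` is multiplied by `e^{4t}` while `r² + s²` is conserved, hence stays `0`.
Finally `‖x‖² = (u² + v² + r² + s²) / 2`. -/

theorem sq_add_sq_eq_exp_mul_of_hasDerivAt {u v : ℝ → ℝ} {l ω : ℝ}
    (hu : ∀ t, HasDerivAt u (l * u t - ω * v t) t)
    (hv : ∀ t, HasDerivAt v (ω * u t + l * v t) t) (t : ℝ) :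
    u t ^ 2 + v t ^ 2 = exp (2 * l * t) * (u 0 ^ 2 + v 0 ^ 2) := by
  have hderiv (s : ℝ) :
      HasDerivAt (fun s => exp (-(2 * l * s)) * (u s ^ 2 + v s ^ 2)) 0 s := by
    have he : HasDerivAt (fun s => exp (-(2 * l * s))) (exp (-(2 * l * s)) * -(2 * l)) s := by
      simpa using ((hasDerivAt_id s).const_mul (2 * l)).neg.exp
    refine (he.fun_mul (((hu s).fun_pow 2).fun_add ((hv s).fun_pow 2))).congr_deriv ?_
    push_cast
    ring
  have hconst := is_const_of_deriv_eq_zero (fun s => (hderiv s).differentiableAt)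
    (fun s => (hderiv s).deriv) t 0
  simp only [mul_zero, neg_zero, exp_zero, one_mul] at hconst
  rw [← hconst, ← mul_assoc, ← exp_add, add_neg_cancel, exp_zero, one_mul]

theorem HasDerivAt.euclideanSpace_apply {ι : Type*} [Fintype ι] {x : ℝ → EuclideanSpace ℝ ι}
    {x' : EuclideanSpace ℝ ι} {t : ℝ} (hx : HasDerivAt x x' t) (i : ι) :
    HasDerivAt (fun t => x t i) (x' i) t :=
  (PiLp.hasFDerivAt_apply 2 (x t) i).comp_hasDerivAt t hx

theorem EuclideanSpace.norm_sq_eq_fin_four (y : EuclideanSpace ℝ (Fin 4)) :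
    ‖y‖ ^ 2 = ((y 0 + y 3) ^ 2 + (y 1 - y 2) ^ 2 + ((y 0 - y 3) ^ 2 + (y 1 + y 2) ^ 2)) / 2 := by
  rw [EuclideanSpace.real_norm_sq_eq, Fin.sum_univ_four]
  ring

section alphaA

variable (θ : ℝ) (y : Fin 4 → ℝ)

theorem alphaA_mulVec_zero_add_three :
    (alphaA θ *ᵥ y) 0 + (alphaA θ *ᵥ y) 3 =
      2 * (y 0 + y 3) - (cot θ - tan θ) * (y 1 - y 2) := by
  simp [alphaA, mulVec, dotProduct, Fin.sum_univ_four]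
  ring

theorem alphaA_mulVec_one_sub_two :
    (alphaA θ *ᵥ y) 1 - (alphaA θ *ᵥ y) 2 =
      (cot θ - tan θ) * (y 0 + y 3) + 2 * (y 1 - y 2) := by
  simp [alphaA, mulVec, dotProduct, Fin.sum_univ_four]
  ring

theorem alphaA_mulVec_zero_sub_three :
    (alphaA θ *ᵥ y) 0 - (alphaA θ *ᵥ y) 3 =
      0 * (y 0 - y 3) - (cot θ + tan θ) * (y 1 + y 2) := by
  simp [alphaA, mulVec, dotProduct, Fin.sum_univ_four]
  ring

theorem alphaA_mulVec_one_add_two :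
    (alphaA θ *ᵥ y) 1 + (alphaA θ *ᵥ y) 2 =
      (cot θ + tan θ) * (y 0 - y 3) + 0 * (y 1 + y 2) := by
  simp [alphaA, mulVec, dotProduct, Fin.sum_univ_four]
  ring

end alphaA

section alphaA_solution

variable {θ : ℝ} {x : ℝ → EuclideanSpace ℝ (Fin 4)}

theorem sq_add_sq_of_alphaA_solution_V
    (hx : ∀ t, HasDerivAt x (WithLp.toLp 2 (alphaA θ *ᵥ x t)) t) (t : ℝ) :
    (x t 0 + x t 3) ^ 2 + (x t 1 - x t 2) ^ 2 =
      exp (4 * t) * ((x 0 0 + x 0 3) ^ 2 + (x 0 1 - x 0 2) ^ 2) := by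
  have hx' (i : Fin 4) (t : ℝ) := (hx t).euclideanSpace_apply i
  have := sq_add_sq_eq_exp_mul_of_hasDerivAt (l := 2) (ω := cot θ - tan θ)
    (fun t => ((hx' 0 t).fun_add (hx' 3 t)).congr_deriv (alphaA_mulVec_zero_add_three θ _))
    (fun t => ((hx' 1 t).fun_sub (hx' 2 t)).congr_deriv (alphaA_mulVec_one_sub_two θ _)) t
  rwa [show (2 : ℝ) * 2 = 4 by norm_num] at this

theorem sq_add_sq_of_alphaA_solution_Vperp
    (hx : ∀ t, HasDerivAt x (WithLp.toLp 2 (alphaA θ *ᵥ x t)) t) (t : ℝ) :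
    (x t 0 - x t 3) ^ 2 + (x t 1 + x t 2) ^ 2 = (x 0 0 - x 0 3) ^ 2 + (x 0 1 + x 0 2) ^ 2 := by
  have hx' (i : Fin 4) (t : ℝ) := (hx t).euclideanSpace_apply i
  simpa using sq_add_sq_eq_exp_mul_of_hasDerivAt (l := 0) (ω := cot θ + tan θ)
    (fun t => ((hx' 0 t).fun_sub (hx' 3 t)).congr_deriv (alphaA_mulVec_zero_sub_three θ _))
    (fun t => ((hx' 1 t).fun_add (hx' 2 t)).congr_deriv (alphaA_mulVec_one_add_two θ _)) t

end alphaA_solution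

open Filter in
theorem stmt17_general (θ : ℝ)
    (x : ℝ → EuclideanSpace ℝ (Fin 4))
    (hx : ∀ t, HasDerivAt x (WithLp.toLp 2 ((alphaA θ).mulVec (x t) : Fin 4 → ℝ) : EuclideanSpace ℝ (Fin 4)) t)
    (a b : ℝ)
    (h0 : x 0 = a • (WithLp.toLp 2 (![1,0,0,1] : Fin 4 → ℝ) : EuclideanSpace ℝ (Fin 4)) +
        b • (WithLp.toLp 2 (![0,1,-1,0] : Fin 4 → ℝ) : EuclideanSpace ℝ (Fin 4)))
    (hne : x 0 ≠ 0) :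
    (∀ t, ‖x t‖ = Real.exp (2 * t) * ‖x 0‖) ∧
    Tendsto (fun t => ‖x t‖) atTop atTop := by
  have hperp : (x 0 0 - x 0 3) ^ 2 + (x 0 1 + x 0 2) ^ 2 = 0 := by
    simp [h0]
  have hnorm (t : ℝ) : ‖x t‖ = exp (2 * t) * ‖x 0‖ := by
    have hsq : ‖x t‖ ^ 2 = (exp (2 * t) * ‖x 0‖) ^ 2 := by
      rw [mul_pow, ← exp_nat_mul, EuclideanSpace.norm_sq_eq_fin_four,
        EuclideanSpace.norm_sq_eq_fin_four, sq_add_sq_of_alphaA_solution_V hx,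
        sq_add_sq_of_alphaA_solution_Vperp hx, hperp]
      ring_nf
    exact (sq_eq_sq₀ (norm_nonneg _) (by positivity)).mp hsq
  refine ⟨hnorm, Tendsto.congr (fun t => (hnorm t).symm) ?_⟩
  exact (tendsto_exp_atTop.comp (tendsto_id.const_mul_atTop two_pos)).atTop_mul_const
    (norm_pos_iff.mpr hne)

open Filter in
theorem stmt17 (θ : ℝ) (hs : Real.sin θ ≠ 0) (hc : Real.cos θ ≠ 0)
    (x : ℝ → EuclideanSpace ℝ (Fin 4))
    (hx : ∀ t, HasDerivAt x (WithLp.toLp 2 ((alphaA θ).mulVec (x t) : Fin 4 → ℝ) : EuclideanSpace ℝ (Fin 4)) t)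
    (a b : ℝ)
    (h0 : x 0 = a • (WithLp.toLp 2 (![1,0,0,1] : Fin 4 → ℝ) : EuclideanSpace ℝ (Fin 4)) +
        b • (WithLp.toLp 2 (![0,1,-1,0] : Fin 4 → ℝ) : EuclideanSpace ℝ (Fin 4)))
    (hne : x 0 ≠ 0) :
    (∀ t, ‖x t‖ = Real.exp (2 * t) * ‖x 0‖) ∧
    Tendsto (fun t => ‖x t‖) atTop atTop :=
  stmt17_general θ x hx a b h0 hne
end

section
/- For any real θ with sin θ ≠ 0 and cos θ ≠ 0, ℝ⁴ decomposes as the orthogonal direct sum of the A(θ)-invariant planes W = span{(1,0,0,−1), (0,1,1,0)} and V = span{(1,0,0,1), (0,1,−1,0)}; W equals the kernel of S₀ and V equals the eigenspace of S₀ for eigenvalue 2, where 2S₀ = A(θ) + A(θ)ᵀ. -/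
/-! Both planes are cut out by two linear equations in the coordinates: `W` by `u₃ = -u₀, u₂ = u₁`
and `V` by `u₃ = u₀, u₂ = -u₁`. These descriptions make `V` visibly the orthogonal complement of `W`,
and turn invariance under `A(θ)` and the eigenspace claims for `S₀` into coordinate identities. -/

open Real Matrix

noncomputable def Wsub : Submodule ℝ (EuclideanSpace ℝ (Fin 4)) :=
  Submodule.span ℝ
    ({(WithLp.toLp 2 (![1,0,0,-1] : Fin 4 → ℝ) : EuclideanSpace ℝ (Fin 4)),
      (WithLp.toLp 2 (![0,1,1,0] : Fin 4 → ℝ) : EuclideanSpace ℝ (Fin 4))} : Set (EuclideanSpace ℝ (Fin 4)))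

noncomputable def Vsub : Submodule ℝ (EuclideanSpace ℝ (Fin 4)) :=
  Submodule.span ℝ
    ({(WithLp.toLp 2 (![1,0,0,1] : Fin 4 → ℝ) : EuclideanSpace ℝ (Fin 4)),
      (WithLp.toLp 2 (![0,1,-1,0] : Fin 4 → ℝ) : EuclideanSpace ℝ (Fin 4))} : Set (EuclideanSpace ℝ (Fin 4)))

lemma mem_Wsub_iff (u : EuclideanSpace ℝ (Fin 4)) : u ∈ Wsub ↔ u 3 = -u 0 ∧ u 2 = u 1 := by
  rw [Wsub, Submodule.mem_span_pair]
  constructor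
  · rintro ⟨c, d, rfl⟩
    constructor <;> simp
  · rintro ⟨h3, h2⟩
    refine ⟨u 0, u 1, PiLp.ext fun i => ?_⟩
    fin_cases i <;> simp [h3, h2]

lemma mem_Vsub_iff (u : EuclideanSpace ℝ (Fin 4)) : u ∈ Vsub ↔ u 3 = u 0 ∧ u 2 = -u 1 := by
  rw [Vsub, Submodule.mem_span_pair]
  constructor
  · rintro ⟨c, d, rfl⟩
    constructor <;> simp
  · rintro ⟨h3, h2⟩
    refine ⟨u 0, u 1, PiLp.ext fun i => ?_⟩
    fin_cases i <;> simp [h3, h2]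

lemma Vsub_eq_orthogonal_Wsub : Vsub = Wsubᗮ := by
  apply le_antisymm
  · intro v hv
    rw [mem_Vsub_iff] at hv
    rw [Submodule.mem_orthogonal]
    intro w hw
    rw [mem_Wsub_iff] at hw
    simp [PiLp.inner_apply, Fin.sum_univ_four, hv.1, hv.2, hw.1, hw.2]
  · intro u hu
    rw [Submodule.mem_orthogonal] at hu
    have h₁ := hu _ (Submodule.subset_span (Set.mem_insert _ _))
    have h₂ := hu _ (Submodule.subset_span (Set.mem_insert_of_mem _ rfl))
    simp [PiLp.inner_apply, Fin.sum_univ_four] at h₁ h₂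
    rw [mem_Vsub_iff]
    constructor <;> linarith

lemma Wsub_sup_Vsub : Wsub ⊔ Vsub = ⊤ := by
  rw [Vsub_eq_orthogonal_Wsub]
  exact Submodule.sup_orthogonal_of_hasOrthogonalProjection

lemma alphaA_mulVec_mem_Wsub (θ : ℝ) {u : EuclideanSpace ℝ (Fin 4)} (hu : u ∈ Wsub) :
    (WithLp.toLp 2 (alphaA θ *ᵥ u) : EuclideanSpace ℝ (Fin 4)) ∈ Wsub := by
  rw [mem_Wsub_iff] at hu ⊢
  simp only [alphaA, mulVec, dotProduct, Fin.sum_univ_four, hu.1, hu.2]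
  constructor <;> simp <;> ring

lemma alphaA_mulVec_mem_Vsub (θ : ℝ) {u : EuclideanSpace ℝ (Fin 4)} (hu : u ∈ Vsub) :
    (WithLp.toLp 2 (alphaA θ *ᵥ u) : EuclideanSpace ℝ (Fin 4)) ∈ Vsub := by
  rw [mem_Vsub_iff] at hu ⊢
  simp only [alphaA, mulVec, dotProduct, Fin.sum_univ_four, hu.1, hu.2]
  constructor <;> simp <;> ring

lemma mem_Wsub_iff_S₀_mulVec_eq_zero (u : EuclideanSpace ℝ (Fin 4)) :
    u ∈ Wsub ↔ S₀ *ᵥ u = 0 := by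
  rw [mem_Wsub_iff]
  constructor
  · rintro ⟨h3, h2⟩
    funext i
    fin_cases i <;> simp [S₀, mulVec, dotProduct, Fin.sum_univ_four, h3, h2]
  · intro h
    have h₀ := congrFun h 0
    have h₁ := congrFun h 1
    simp [S₀, mulVec, dotProduct, Fin.sum_univ_four] at h₀ h₁
    constructor <;> linarith

lemma mem_Vsub_iff_S₀_mulVec_eq_two_smul (u : EuclideanSpace ℝ (Fin 4)) :
    u ∈ Vsub ↔ (WithLp.toLp 2 (S₀ *ᵥ u) : EuclideanSpace ℝ (Fin 4)) = (2 : ℝ) • u := by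
  rw [mem_Vsub_iff]
  constructor
  · rintro ⟨h3, h2⟩
    ext i
    fin_cases i <;> simp [S₀, mulVec, dotProduct, Fin.sum_univ_four, h3, h2] <;> ring
  · intro h
    have h₀ := congrArg (· 0) h
    have h₁ := congrArg (· 1) h
    simp [S₀, mulVec, dotProduct, Fin.sum_univ_four] at h₀ h₁
    constructor <;> linarith

lemma two_smul_S₀_eq_alphaA_add_transpose (θ : ℝ) : (2 : ℝ) • S₀ = alphaA θ + (alphaA θ)ᵀ := by
  ext i j
  fin_cases i <;> fin_cases j <;> simp [S₀, alphaA] <;> ring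

theorem stmt19_general (θ : ℝ) :
    Wsub ⊔ Vsub = (⊤ : Submodule ℝ (EuclideanSpace ℝ (Fin 4))) ∧
    Vsub = Wsubᗮ ∧
    (∀ u ∈ Wsub, (WithLp.toLp 2 ((alphaA θ).mulVec u : Fin 4 → ℝ) : EuclideanSpace ℝ (Fin 4)) ∈ Wsub) ∧
    (∀ u ∈ Vsub, (WithLp.toLp 2 ((alphaA θ).mulVec u : Fin 4 → ℝ) : EuclideanSpace ℝ (Fin 4)) ∈ Vsub) ∧
    (∀ u : EuclideanSpace ℝ (Fin 4), u ∈ Wsub ↔ S₀.mulVec u = 0) ∧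
    (∀ u : EuclideanSpace ℝ (Fin 4), u ∈ Vsub ↔
      (WithLp.toLp 2 (S₀.mulVec u : Fin 4 → ℝ) : EuclideanSpace ℝ (Fin 4)) = (2 : ℝ) • u) ∧
    (2 : ℝ) • S₀ = alphaA θ + (alphaA θ)ᵀ :=
  ⟨Wsub_sup_Vsub, Vsub_eq_orthogonal_Wsub, fun _ => alphaA_mulVec_mem_Wsub θ,
    fun _ => alphaA_mulVec_mem_Vsub θ, mem_Wsub_iff_S₀_mulVec_eq_zero,
    mem_Vsub_iff_S₀_mulVec_eq_two_smul, two_smul_S₀_eq_alphaA_add_transpose θ⟩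

theorem stmt19 (θ : ℝ) (hs : Real.sin θ ≠ 0) (hc : Real.cos θ ≠ 0) :
    Wsub ⊔ Vsub = (⊤ : Submodule ℝ (EuclideanSpace ℝ (Fin 4))) ∧
    Vsub = Wsubᗮ ∧
    (∀ u ∈ Wsub, (WithLp.toLp 2 ((alphaA θ).mulVec u : Fin 4 → ℝ) : EuclideanSpace ℝ (Fin 4)) ∈ Wsub) ∧
    (∀ u ∈ Vsub, (WithLp.toLp 2 ((alphaA θ).mulVec u : Fin 4 → ℝ) : EuclideanSpace ℝ (Fin 4)) ∈ Vsub) ∧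
    (∀ u : EuclideanSpace ℝ (Fin 4), u ∈ Wsub ↔ S₀.mulVec u = 0) ∧
    (∀ u : EuclideanSpace ℝ (Fin 4), u ∈ Vsub ↔
      (WithLp.toLp 2 (S₀.mulVec u : Fin 4 → ℝ) : EuclideanSpace ℝ (Fin 4)) = (2 : ℝ) • u) ∧
    (2 : ℝ) • S₀ = alphaA θ + (alphaA θ)ᵀ :=
  stmt19_general θ
end
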